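/- arXiv:2010.00776 — 5 statements merged into one kernel-verified Lean document; each statement's English description precedes it below -/
import Mathlib

section
/- Let n ≥ 1 be an integer, let f : ℝ → ℝ be twice continuously differentiable, let a, b, β₁, β₂ be real constants, and let u be a smooth positive function on the n-dimensional Euclidean space ℝⁿ satisfying Δu + a·u·f(log u) + b·u = 0, where Δ denotes the Laplacian (the trace of the Hessian). Set ω = log u and G = |∇ω|² + β₁·f(ω) + β₂. Then at every point of ℝⁿ one has ΔG ≥ (2/n)·G² + [ (β₁ − 2a)·f′(ω) + β₁·f″(ω) − (4/n)(β₁ − a)·f(ω) − (4/n)(β₂ − b) ]·G − 2⟨∇ω, ∇G⟩ + (2/n)(β₁ − a)²·f(ω)² − β₁(β₁ − a)·f(ω)·f′(ω) − β₁²·f(ω)·f″(ω) + (4/n)(β₁ − a)(β₂ − b)·f(ω) + (2aβ₂ − bβ₁ − β₁β₂)·f′(ω) − β₁β₂·f″(ω). -/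
open RealInnerProductSpace

/-- The Euclidean Laplacian: the sum of the pure second partial derivatives in the
directions of the standard orthonormal basis (the trace of the Hessian). -/
noncomputable def lap {n : ℕ} (g : EuclideanSpace ℝ (Fin n) → ℝ)
    (x : EuclideanSpace ℝ (Fin n)) : ℝ :=
  ∑ i : Fin n,
    fderiv ℝ (fun y => fderiv ℝ g y (EuclideanSpace.basisFun (Fin n) ℝ i)) x
      (EuclideanSpace.basisFun (Fin n) ℝ i)

section Aux
variable {n : ℕ}

noncomputable def pd (g : EuclideanSpace ℝ (Fin n) → ℝ) (i : Fin n)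
    (x : EuclideanSpace ℝ (Fin n)) : ℝ :=
  fderiv ℝ g x (EuclideanSpace.basisFun (Fin n) ℝ i)

theorem pd_contDiff_top {g : EuclideanSpace ℝ (Fin n) → ℝ}
    (hg : ContDiff ℝ (⊤ : ℕ∞) g) (i : Fin n) : ContDiff ℝ (⊤ : ℕ∞) (pd g i) :=
  ((hg.of_le le_rfl).fderiv_right (m := ((⊤ : ℕ∞) : WithTop ℕ∞)) (by exact_mod_cast le_top)).clm_apply contDiff_const

theorem pd_add {g h : EuclideanSpace ℝ (Fin n) → ℝ} {x} (i : Fin n)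
    (hg : DifferentiableAt ℝ g x) (hh : DifferentiableAt ℝ h x) :
    pd (fun y => g y + h y) i x = pd g i x + pd h i x := by
  simp [pd, fderiv_fun_add hg hh]

theorem pd_const (c : ℝ) (i : Fin n) (x : EuclideanSpace ℝ (Fin n)) :
    pd (fun _ => c) i x = 0 := by simp [pd]

theorem pd_const_mul {g : EuclideanSpace ℝ (Fin n) → ℝ} {x} (c : ℝ) (i : Fin n)
    (hg : DifferentiableAt ℝ g x) :
    pd (fun y => c * g y) i x = c * pd g i x := by
  simp [pd, fderiv_const_mul hg]

theorem pd_mul {g h : EuclideanSpace ℝ (Fin n) → ℝ} {x} (i : Fin n)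
    (hg : DifferentiableAt ℝ g x) (hh : DifferentiableAt ℝ h x) :
    pd (fun y => g y * h y) i x = pd g i x * h x + g x * pd h i x := by
  simp [pd, fderiv_fun_mul hg hh]; ring

theorem pd_sum {m : Type*} [Fintype m] {A : m → EuclideanSpace ℝ (Fin n) → ℝ} {x} (i : Fin n)
    (hA : ∀ j, DifferentiableAt ℝ (A j) x) :
    pd (fun y => ∑ j, A j y) i x = ∑ j, pd (A j) i x := by
  simp [pd, fderiv_fun_sum (fun j _ => hA j)]

theorem pd_comp {f : ℝ → ℝ} {g : EuclideanSpace ℝ (Fin n) → ℝ} {x} (i : Fin n)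
    (hf : DifferentiableAt ℝ f (g x)) (hg : DifferentiableAt ℝ g x) :
    pd (fun y => f (g y)) i x = deriv f (g x) * pd g i x := by
  have : pd (fun y => f (g y)) i x = ((fderiv ℝ f (g x)).comp (fderiv ℝ g x))
      (EuclideanSpace.basisFun (Fin n) ℝ i) := by
    rw [pd, show (fun y => f (g y)) = f ∘ g from rfl, fderiv_comp x hf hg]
  rw [this]
  simp only [ContinuousLinearMap.comp_apply]
  rw [show fderiv ℝ g x (EuclideanSpace.basisFun (Fin n) ℝ i) = pd g i x from rfl,
    ← fderiv_apply_one_eq_deriv]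
  have := (fderiv ℝ f (g x)).map_smul (pd g i x) (1:ℝ)
  simp only [smul_eq_mul, mul_one] at this
  rw [this, mul_comm]

theorem inner_gradient {g : EuclideanSpace ℝ (Fin n) → ℝ} {x} (v : EuclideanSpace ℝ (Fin n)) :
    ⟪gradient g x, v⟫ = fderiv ℝ g x v := by
  rw [gradient, InnerProductSpace.toDual_symm_apply]

theorem inner_grad_grad {g h : EuclideanSpace ℝ (Fin n) → ℝ} {x} :
    ⟪gradient g x, gradient h x⟫ = ∑ i, pd g i x * pd h i x := by
  rw [← (EuclideanSpace.basisFun (Fin n) ℝ).sum_inner_mul_inner (gradient g x) (gradient h x)]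
  congr 1; ext i
  rw [inner_gradient, real_inner_comm, inner_gradient]
  rfl

theorem norm_sq_grad {g : EuclideanSpace ℝ (Fin n) → ℝ} {x} :
    ‖gradient g x‖ ^ 2 = ∑ i, pd g i x ^ 2 := by
  rw [← real_inner_self_eq_norm_sq, inner_grad_grad]
  simp [sq]

theorem pd_comm {g : EuclideanSpace ℝ (Fin n) → ℝ} (hg : ContDiff ℝ (⊤ : ℕ∞) g) (i j : Fin n) :
    pd (pd g i) j = pd (pd g j) i := by
  funext x
  have hsymm : IsSymmSndFDerivAt ℝ g x :=
    (hg.contDiffAt).isSymmSndFDerivAt (by rw [minSmoothness_of_isRCLikeNormedField]; exact WithTop.coe_le_coe.mpr (le_top : (2 : ℕ∞) ≤ ⊤))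
  have hd : DifferentiableAt ℝ (fderiv ℝ g) x :=
    (((hg.of_le le_rfl).fderiv_right (m := (⊤ : ℕ∞)) (by exact_mod_cast le_top)).differentiable (by simp)) x
  have ev : ∀ (v w : EuclideanSpace ℝ (Fin n)),
      fderiv ℝ (fun y => fderiv ℝ g y v) x w = fderiv ℝ (fderiv ℝ g) x w v := by
    intro v w
    rw [fderiv_clm_apply hd (differentiableAt_const v)]
    simp
  unfold pd
  rw [ev, ev]
  exact hsymm _ _

theorem lap_eq (g : EuclideanSpace ℝ (Fin n) → ℝ) (x : EuclideanSpace ℝ (Fin n)) :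
    lap g x = ∑ i, pd (pd g i) i x := rfl

end Aux

theorem final_arith (nr S IP W F F' F'' a b β₁ β₂ L Λ G : ℝ) (hnr : 0 < nr)
    (hL : L = 2 * S + 2 * (-IP + (β₁ - a) * F' * W) + β₁ * (F'' * W + F' * Λ))
    (hGe : G = W + β₁ * F + β₂) (hΛ : Λ = -W - a * F - b) (hCS : Λ ^ 2 ≤ nr * S) :
    L ≥ 2 / nr * G ^ 2 +
        ((β₁ - 2 * a) * F' + β₁ * F'' - 4 / nr * (β₁ - a) * F - 4 / nr * (β₂ - b)) * G -
        2 * IP + 2 / nr * (β₁ - a) ^ 2 * F ^ 2 -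
        β₁ * (β₁ - a) * F * F' -
        β₁ ^ 2 * F * F'' +
        4 / nr * (β₁ - a) * (β₂ - b) * F +
        (2 * a * β₂ - b * β₁ - β₁ * β₂) * F' - β₁ * β₂ * F'' := by
  subst hL hGe hΛ
  have hS : (-W - a * F - b) ^ 2 / nr ≤ S := by
    rw [div_le_iff₀ hnr]
    linarith [hCS]
  have h0 : 0 ≤ 2 / nr * (β₂ - b) ^ 2 := by positivity
  have key : 2 / nr * (W + β₁ * F + β₂) ^ 2 +
        ((β₁ - 2 * a) * F' + β₁ * F'' - 4 / nr * (β₁ - a) * F - 4 / nr * (β₂ - b)) *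
          (W + β₁ * F + β₂) -
        2 * IP + 2 / nr * (β₁ - a) ^ 2 * F ^ 2 -
        β₁ * (β₁ - a) * F * F' -
        β₁ ^ 2 * F * F'' +
        4 / nr * (β₁ - a) * (β₂ - b) * F +
        (2 * a * β₂ - b * β₁ - β₁ * β₂) * F' - β₁ * β₂ * F''
      = 2 * ((-W - a * F - b) ^ 2 / nr) + 2 * (-IP + (β₁ - a) * F' * W) +
        β₁ * (F'' * W + F' * (-W - a * F - b)) - 2 / nr * (β₂ - b) ^ 2 := by
    field_simp
    ring
  rw [ge_iff_le, key]
  linarith [hS, h0]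

theorem stmt_0 (n : ℕ) (hn : 1 ≤ n) (f : ℝ → ℝ) (hf : ContDiff ℝ 2 f)
    (a b β₁ β₂ : ℝ) (u : EuclideanSpace ℝ (Fin n) → ℝ)
    (hu : ContDiff ℝ (⊤ : ℕ∞) u) (hupos : ∀ x, 0 < u x)
    (heq : ∀ x, lap u x + a * u x * f (Real.log (u x)) + b * u x = 0)
    (ω : EuclideanSpace ℝ (Fin n) → ℝ) (hω : ω = fun x => Real.log (u x))
    (G : EuclideanSpace ℝ (Fin n) → ℝ)
    (hG : G = fun x => ‖gradient ω x‖ ^ 2 + β₁ * f (ω x) + β₂) :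
    ∀ x, lap G x ≥
      (2 / n) * (G x) ^ 2 +
        ((β₁ - 2 * a) * deriv f (ω x) + β₁ * deriv (deriv f) (ω x) -
            (4 / n) * (β₁ - a) * f (ω x) - (4 / n) * (β₂ - b)) * G x -
        2 * ⟪gradient ω x, gradient G x⟫ +
        (2 / n) * (β₁ - a) ^ 2 * (f (ω x)) ^ 2 -
        β₁ * (β₁ - a) * f (ω x) * deriv f (ω x) -
        β₁ ^ 2 * f (ω x) * deriv (deriv f) (ω x) +
        (4 / n) * (β₁ - a) * (β₂ - b) * f (ω x) +
        (2 * a * β₂ - b * β₁ - β₁ * β₂) * deriv f (ω x) -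
        β₁ * β₂ * deriv (deriv f) (ω x) := by
  intro x
  -- basic smoothness
  have hωs : ContDiff ℝ (⊤ : ℕ∞) ω := by
    rw [hω, contDiff_iff_contDiffAt]
    intro y
    exact (hu.contDiffAt).log (ne_of_gt (hupos y))
  have hωd : Differentiable ℝ ω := hωs.differentiable (by simp)
  have hpds : ∀ i, ContDiff ℝ (⊤ : ℕ∞) (pd ω i) := fun i => pd_contDiff_top hωs i
  have hpdd : ∀ i, Differentiable ℝ (pd ω i) := fun i => (hpds i).differentiable (by simp)
  have hpds2 : ∀ i j, ContDiff ℝ (⊤ : ℕ∞) (pd (pd ω i) j) := fun i j => pd_contDiff_top (hpds i) j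
  have hpdd2 : ∀ i j, Differentiable ℝ (pd (pd ω i) j) := fun i j =>
    (hpds2 i j).differentiable (by simp)
  have hfd : Differentiable ℝ f := hf.differentiable (by simp)
  have hf' : ContDiff ℝ 1 (deriv f) := by
    have h2 : ContDiff ℝ ((1:WithTop ℕ∞) + 1) f := by norm_num; exact hf
    rw [contDiff_succ_iff_deriv] at h2
    exact h2.2.2
  have hf'd : Differentiable ℝ (deriv f) := hf'.differentiable (by simp)
  have hfωd : Differentiable ℝ (fun y => f (ω y)) :=
    hfd.comp hωd
  have hf'ωd : Differentiable ℝ (fun y => deriv f (ω y)) := hf'd.comp hωd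
  -- W = |∇ω|²  as a sum of squares
  set W : EuclideanSpace ℝ (Fin n) → ℝ := fun y => ∑ i, pd ω i y ^ 2 with hWdef
  have hWd : Differentiable ℝ W := by
    apply Differentiable.fun_sum
    intro i _
    exact (hpdd i).pow 2
  -- u = exp ω
  have huexp : ∀ y, u y = Real.exp (ω y) := by
    intro y; rw [hω]; exact (Real.exp_log (hupos y)).symm
  have hueq : u = fun y => Real.exp (ω y) := funext huexp
  -- Step A : lap ω = -W - a f(ω) - b
  have hexpd : Differentiable ℝ (fun z => Real.exp (ω z)) := Real.differentiable_exp.comp hωd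
  have hpdu : ∀ i, pd u i = fun z => Real.exp (ω z) * pd ω i z := by
    intro i; funext z
    rw [hueq, pd_comp i (Real.differentiable_exp (ω z)) (hωd z), Real.deriv_exp]
  have hlapu : ∀ y, lap u y = Real.exp (ω y) * (W y + lap ω y) := by
    intro y
    rw [lap_eq]
    have : ∀ i, pd (pd u i) i y
        = Real.exp (ω y) * (pd ω i y ^ 2) + Real.exp (ω y) * pd (pd ω i) i y := by
      intro i
      rw [hpdu i, pd_mul i (hexpd y) (hpdd i y),
        pd_comp i (Real.differentiable_exp (ω y)) (hωd y), Real.deriv_exp]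
      ring
    rw [Finset.sum_congr rfl (fun i _ => this i), Finset.sum_add_distrib,
      ← Finset.mul_sum, ← Finset.mul_sum, lap_eq]
    ring
  have hlapω : ∀ y, lap ω y = -W y - a * f (ω y) - b := by
    intro y
    have h0 := heq y
    rw [hlapu y, huexp y] at h0
    rw [Real.log_exp] at h0
    have hexppos : (0:ℝ) < Real.exp (ω y) := Real.exp_pos _
    have : Real.exp (ω y) * (W y + lap ω y + a * f (ω y) + b) = 0 := by ring_nf; ring_nf at h0; linarith
    have h2 : W y + lap ω y + a * f (ω y) + b = 0 := by
      rcases mul_eq_zero.mp this with h | h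
      · exact absurd h (ne_of_gt hexppos)
      · exact h
    linarith
  -- Step B : lap (f ∘ ω)
  have hpdfω : ∀ i, pd (fun z => f (ω z)) i = fun z => deriv f (ω z) * pd ω i z := by
    intro i; funext z
    rw [pd_comp i (hfd (ω z)) (hωd z)]
  have hlapfω : ∀ y, lap (fun z => f (ω z)) y
      = deriv (deriv f) (ω y) * W y + deriv f (ω y) * lap ω y := by
    intro y
    rw [lap_eq]
    have : ∀ i, pd (pd (fun z => f (ω z)) i) i y
        = deriv (deriv f) (ω y) * pd ω i y ^ 2 + deriv f (ω y) * pd (pd ω i) i y := by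
      intro i
      rw [hpdfω i, pd_mul i (hf'ωd y) (hpdd i y), pd_comp i (hf'd (ω y)) (hωd y)]
      ring
    rw [Finset.sum_congr rfl (fun i _ => this i), Finset.sum_add_distrib,
      ← Finset.mul_sum, ← Finset.mul_sum, lap_eq]
  -- pd G in terms of pd W  (function level)
  have hGW : G = fun y => W y + β₁ * f (ω y) + β₂ := by
    rw [hG]; funext y; rw [norm_sq_grad]
  have hpdG : ∀ i y, pd G i y = pd W i y + β₁ * (deriv f (ω y) * pd ω i y) := by
    intro i y
    rw [hGW]
    rw [pd_add i ((hWd y).fun_add ((hfωd y).const_mul β₁)) (differentiableAt_const β₂),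
      pd_const, pd_add i (hWd y) ((hfωd y).const_mul β₁),
      pd_const_mul β₁ i (hfωd y), pd_comp i (hfd (ω y)) (hωd y)]
    ring
  -- Step C : Bochner
  have hpdW : ∀ j, pd W j = fun z => ∑ i, 2 * (pd ω i z * pd (pd ω i) j z) := by
    intro j; funext z
    rw [hWdef]
    rw [pd_sum j (fun i => (hpdd i z).fun_pow 2)]
    refine Finset.sum_congr rfl (fun i _ => ?_)
    have hsq : (fun y => pd ω i y ^ 2) = fun y => pd ω i y * pd ω i y := by
      funext w; ring
    rw [hsq, pd_mul j (hpdd i z) (hpdd i z)]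
    ring
  have hpdWd : ∀ j, Differentiable ℝ (pd W j) := by
    intro j
    rw [hpdW j]
    exact Differentiable.fun_sum fun i _ =>
      (((hpdd i).mul (hpdd2 i j)).const_mul 2)
  have hthird : ∀ i (y : EuclideanSpace ℝ (Fin n)),
      ∑ j, pd (pd (pd ω i) j) j y = pd (fun z => lap ω z) i y := by
    intro i y
    have hcomm : ∀ j, pd (pd (pd ω i) j) j = pd (pd (pd ω j) j) i := by
      intro j
      rw [pd_comm hωs i j, pd_comm (hpds j) i j]
    rw [Finset.sum_congr rfl (fun j _ => congrFun (hcomm j) y)]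
    rw [← pd_sum i (fun j => (hpdd2 j j y))]
    rfl
  have hBochner : ∀ y, lap W y = 2 * (∑ j, ∑ i, pd (pd ω i) j y ^ 2)
      + 2 * ∑ i, pd ω i y * pd (fun z => lap ω z) i y := by
    intro y
    rw [lap_eq]
    have hstep : ∀ j, pd (pd W j) j y
        = ∑ i, (2 * pd (pd ω i) j y ^ 2 + 2 * (pd ω i y * pd (pd (pd ω i) j) j y)) := by
      intro j
      rw [hpdW j, pd_sum j (fun i => ((hpdd i y).fun_mul (hpdd2 i j y)).const_mul 2)]
      refine Finset.sum_congr rfl (fun i _ => ?_)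
      rw [pd_const_mul 2 j ((hpdd i y).fun_mul (hpdd2 i j y)),
        pd_mul j (hpdd i y) (hpdd2 i j y)]
      ring
    rw [Finset.sum_congr rfl (fun j _ => hstep j)]
    have : ∀ j, ∑ i, (2 * pd (pd ω i) j y ^ 2 + 2 * (pd ω i y * pd (pd (pd ω i) j) j y))
        = (∑ i, 2 * pd (pd ω i) j y ^ 2) + ∑ i, 2 * (pd ω i y * pd (pd (pd ω i) j) j y) :=
      fun j => Finset.sum_add_distrib
    rw [Finset.sum_congr rfl (fun j _ => this j), Finset.sum_add_distrib]
    rw [Finset.sum_comm (f := fun j i => 2 * (pd ω i y * pd (pd (pd ω i) j) j y))]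
    have h1st : ∑ j, ∑ i, 2 * pd (pd ω i) j y ^ 2
        = 2 * ∑ j, ∑ i, pd (pd ω i) j y ^ 2 := by
      rw [Finset.mul_sum]
      exact Finset.sum_congr rfl fun j _ => by rw [Finset.mul_sum]
    have h2nd : ∑ i, ∑ j, 2 * (pd ω i y * pd (pd (pd ω i) j) j y)
        = 2 * ∑ i, pd ω i y * pd (fun z => lap ω z) i y := by
      rw [Finset.mul_sum]
      refine Finset.sum_congr rfl (fun i _ => ?_)
      have : ∑ j, 2 * (pd ω i y * pd (pd (pd ω i) j) j y)
          = 2 * (pd ω i y * ∑ j, pd (pd (pd ω i) j) j y) := by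
        rw [Finset.mul_sum, Finset.mul_sum]
      rw [this, hthird i y]
    rw [h1st, h2nd]
  -- Step D : pd (lap ω) in terms of pd G
  have hΛfun : (fun z => lap ω z) = fun z => (-1 : ℝ) * W z + ((-a) * f (ω z) + (-b)) := by
    funext z; rw [hlapω z]; ring
  have hpdΛ : ∀ i y, pd (fun z => lap ω z) i y
      = -(pd G i y) + (β₁ - a) * (deriv f (ω y) * pd ω i y) := by
    intro i y
    rw [hΛfun]
    rw [pd_add i ((hWd y).const_mul (-1)) (((hfωd y).const_mul (-a)).fun_add (differentiableAt_const (-b))),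
      pd_const_mul (-1) i (hWd y),
      pd_add i ((hfωd y).const_mul (-a)) (differentiableAt_const (-b)),
      pd_const, pd_const_mul (-a) i (hfωd y), pd_comp i (hfd (ω y)) (hωd y),
      hpdG i y]
    ring
  -- Step E : lap G = lap W + β₁ lap (f∘ω)
  have hlapG : lap G x = lap W x + β₁ * lap (fun z => f (ω z)) x := by
    have hpdGfun : ∀ i, pd G i = fun y => pd W i y + β₁ * pd (fun z => f (ω z)) i y := by
      intro i; funext y
      rw [hpdG i y, hpdfω i]
    rw [lap_eq, lap_eq, lap_eq]
    have hfω2d : ∀ i, Differentiable ℝ (pd (fun z => f (ω z)) i) := by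
      intro i
      rw [hpdfω i]
      exact (hf'ωd).mul (hpdd i)
    have : ∀ i, pd (pd G i) i x
        = pd (pd W i) i x + β₁ * pd (pd (fun z => f (ω z)) i) i x := by
      intro i
      rw [hpdGfun i,
        pd_add i (hpdWd i x) ((hfω2d i x).const_mul β₁),
        pd_const_mul β₁ i (hfω2d i x)]
    rw [Finset.sum_congr rfl (fun i _ => this i), Finset.sum_add_distrib, ← Finset.mul_sum]
  -- Step F : Cauchy-Schwarz
  have hCS : (lap ω x) ^ 2 ≤ (n : ℝ) * ∑ j, ∑ i, pd (pd ω i) j x ^ 2 := by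
    have h1 : (lap ω x) ^ 2 ≤ (n : ℝ) * ∑ j, pd (pd ω j) j x ^ 2 := by
      rw [lap_eq]
      have := sq_sum_le_card_mul_sum_sq (s := (Finset.univ : Finset (Fin n)))
        (f := fun j => pd (pd ω j) j x)
      simpa using this
    have h2 : ∑ j, pd (pd ω j) j x ^ 2 ≤ ∑ j, ∑ i, pd (pd ω i) j x ^ 2 := by
      refine Finset.sum_le_sum (fun j _ => ?_)
      exact Finset.single_le_sum (f := fun i => pd (pd ω i) j x ^ 2)
        (fun i _ => sq_nonneg _) (Finset.mem_univ j)
    have hn0 : (0:ℝ) ≤ (n:ℝ) := Nat.cast_nonneg n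
    nlinarith [h1, h2, hn0]
  -- assembly
  have hnr : (0:ℝ) < (n:ℝ) := by exact_mod_cast Nat.lt_of_lt_of_le Nat.zero_lt_one hn
  have hstep2 : ∑ i, pd ω i x * pd (fun z => lap ω z) i x
      = -⟪gradient ω x, gradient G x⟫ + (β₁ - a) * deriv f (ω x) * W x := by
    have h1 : ∀ i, pd ω i x * pd (fun z => lap ω z) i x
        = -(pd ω i x * pd G i x) + (β₁ - a) * deriv f (ω x) * pd ω i x ^ 2 := by
      intro i; rw [hpdΛ i x]; ring
    rw [Finset.sum_congr rfl (fun i _ => h1 i), Finset.sum_add_distrib,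
      ← Finset.mul_sum, Finset.sum_neg_distrib, ← inner_grad_grad]
  have hLval : lap G x = 2 * (∑ j, ∑ i, pd (pd ω i) j x ^ 2)
      + 2 * (-⟪gradient ω x, gradient G x⟫ + (β₁ - a) * deriv f (ω x) * W x)
      + β₁ * (deriv (deriv f) (ω x) * W x + deriv f (ω x) * lap ω x) := by
    rw [hlapG, hBochner x, hlapfω x, hstep2]
  have hGx : G x = W x + β₁ * f (ω x) + β₂ := by rw [hGW]
  exact final_arith (n:ℝ) _ _ (W x) (f (ω x)) (deriv f (ω x)) (deriv (deriv f) (ω x))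
    a b β₁ β₂ (lap G x) (lap ω x) (G x) hnr hLval hGx (hlapω x) hCS
end

section
/- Let n be a positive integer and let p, λ be real numbers with p ≥ 2 and 1 < λ < 2. Define J = ((2−λ)p − √((2−λ)²p² + (8λ(λ−1)/n)·p(p−1)))/(2λp(p−1)); note J < 0. Then for every real K ≥ 0, every real b, and every real ω with ω ≤ 1/J, one has 2λK + (4(λ−1)/n)·(2|b| − b) + (2(2−λ)|b| − λb)·p·ω⁻¹ − 2λ|b|p(p−1)·ω⁻² ≤ 2λK + 12(λ−1)|b|/n + (4−λ)p|b|·|J|. -/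
set_option maxHeartbeats 1000000 in
theorem stmt_7 (n : ℕ) (hn : 0 < n) (p l : ℝ) (hp : 2 ≤ p) (hl1 : 1 < l) (hl2 : l < 2)
    (J : ℝ)
    (hJ : J = ((2 - l) * p -
      Real.sqrt ((2 - l) ^ 2 * p ^ 2 + (8 * l * (l - 1) / n) * p * (p - 1))) /
      (2 * l * p * (p - 1)))
    (K b : ℝ) (hK : 0 ≤ K) (ω : ℝ) (hω : ω ≤ 1 / J) :
    2 * l * K + (4 * (l - 1) / n) * (2 * |b| - b) + (2 * (2 - l) * |b| - l * b) * p * ω⁻¹ -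
        2 * l * |b| * p * (p - 1) * (ω ^ 2)⁻¹ ≤
      2 * l * K + 12 * (l - 1) * |b| / n + (4 - l) * p * |b| * |J| := by
  have hnR : (0:ℝ) < n := by exact_mod_cast hn
  have hp0 : (0:ℝ) < p := by linarith
  -- J < 0
  have hden : (0:ℝ) < 2 * l * p * (p - 1) := by nlinarith
  have hsqrt : (2 - l) * p < Real.sqrt ((2 - l) ^ 2 * p ^ 2 + (8 * l * (l - 1) / n) * p * (p - 1)) := by
    rw [show (2 - l) * p = Real.sqrt (((2-l)*p)^2) from (Real.sqrt_sq (by nlinarith)).symm]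
    apply Real.sqrt_lt_sqrt (by positivity)
    have h1 : 0 < 8 * l * (l - 1) / n := by
      apply div_pos (by nlinarith) hnR
    nlinarith
  have hJneg : J < 0 := by
    rw [hJ]
    apply div_neg_of_neg_of_pos _ hden
    linarith
  have hJinv : 1 / J < 0 := div_neg_of_pos_of_neg one_pos hJneg
  have hω0 : ω < 0 := lt_of_le_of_lt hω hJinv
  have hJu : J * (1 / J) = 1 := mul_one_div_cancel hJneg.ne
  have h1Jω : 1 ≤ J * ω := by
    nlinarith [mul_nonneg (by linarith : (0:ℝ) ≤ 1/J - ω) (by linarith : (0:ℝ) ≤ -J)]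
  have hJt : J ≤ ω⁻¹ := by
    rw [inv_eq_one_div, le_div_iff_of_neg hω0]
    linarith [mul_comm J ω]
  set t := ω⁻¹ with ht
  have ht0 : t < 0 := by rw [ht]; exact inv_lt_zero.mpr hω0
  have habsJ : |J| = -J := abs_of_neg hJneg
  have hsq : (ω ^ 2)⁻¹ = t ^ 2 := by rw [ht, ← inv_pow]
  rw [hsq, habsJ]
  have hb1 : b ≤ |b| := le_abs_self b
  have hb2 : -b ≤ |b| := neg_le_abs b
  have hb0 : 0 ≤ |b| := abs_nonneg b
  set B := |b| with hBdef
  -- term 1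
  have h1 : (4 * (l - 1) / n) * (2 * B - b) ≤ 12 * (l - 1) * B / n := by
    rw [div_mul_eq_mul_div, div_le_div_iff₀ hnR hnR]
    have hl0 : 0 ≤ l - 1 := by linarith
    nlinarith [mul_nonneg (mul_nonneg hl0 (by linarith : (0:ℝ) ≤ B + b)) hnR.le]
  -- term 3 nonneg
  have h3 : 0 ≤ 2 * l * B * p * (p - 1) * t ^ 2 :=
    mul_nonneg (by nlinarith) (sq_nonneg t)
  -- term 2
  have habst : |t| ≤ -J := by rw [abs_of_neg ht0]; linarith
  have hcabs : |2 * (2 - l) * B - l * b| ≤ (4 - l) * B := by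
    rw [abs_le]
    have q1 := mul_nonneg (by linarith : (0:ℝ) ≤ l) (by linarith : (0:ℝ) ≤ B - b)
    have q2 := mul_nonneg (by linarith : (0:ℝ) ≤ l) (by linarith : (0:ℝ) ≤ B + b)
    have q3 := mul_nonneg (by linarith : (0:ℝ) ≤ 8 - 4 * l) hb0
    constructor <;> [skip; skip] <;> nlinarith [q1, q2, q3]
  have key : (2 * (2 - l) * B - l * b) * p * t ≤ (4 - l) * B * p * (-J) := by
    calc (2 * (2 - l) * B - l * b) * p * t
        ≤ |(2 * (2 - l) * B - l * b) * p * t| := le_abs_self _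
      _ = |2 * (2 - l) * B - l * b| * p * |t| := by
          rw [abs_mul, abs_mul, abs_of_pos hp0]
      _ ≤ (4 - l) * B * p * (-J) := by
          apply mul_le_mul (mul_le_mul_of_nonneg_right hcabs hp0.le) habst (abs_nonneg t)
          exact mul_nonneg (mul_nonneg (by linarith) hb0) hp0.le
  have heq : (4 - l) * B * p * (-J) = (4 - l) * p * B * (-J) := by ring
  linarith
end

section
/- Let n be a positive integer and let p, λ be real numbers with p ≥ 2 and 1 < λ < 2. Define J = ((2−λ)p − √((2−λ)²p² + (8λ(λ−1)/n)·p(p−1)))/(2λp(p−1)). Then J < 0, |J| ≤ 2(λ−1)/((2−λ)np), and J² ≤ 2(λ−1)/(λnp(p−1)). -/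
theorem stmt_8 (n : ℕ) (hn : 0 < n) (p l : ℝ) (hp : 2 ≤ p) (hl1 : 1 < l) (hl2 : l < 2)
    (J : ℝ)
    (hJ : J = ((2 - l) * p -
      Real.sqrt ((2 - l) ^ 2 * p ^ 2 + (8 * l * (l - 1) / n) * p * (p - 1))) /
      (2 * l * p * (p - 1))) :
    J < 0 ∧ |J| ≤ 2 * (l - 1) / ((2 - l) * n * p) ∧
      J ^ 2 ≤ 2 * (l - 1) / (l * n * p * (p - 1)) := by
  have hn' : (0:ℝ) < n := by exact_mod_cast hn
  have hp0 : (0:ℝ) < p := by linarith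
  have hp1 : (0:ℝ) < p - 1 := by linarith
  have hl0 : (0:ℝ) < l := by linarith
  have h2l : (0:ℝ) < 2 - l := by linarith
  have hl1' : (0:ℝ) < l - 1 := by linarith
  set s : ℝ := Real.sqrt ((2 - l) ^ 2 * p ^ 2 + (8 * l * (l - 1) / n) * p * (p - 1)) with hs
  set a : ℝ := (2 - l) * p with ha
  set b : ℝ := (8 * l * (l - 1) / n) * p * (p - 1) with hb
  set D : ℝ := 2 * l * p * (p - 1) with hD
  have ha0 : 0 < a := by positivity
  have hb0 : 0 < b := by rw [hb]; positivity
  have hD0 : 0 < D := by positivity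
  have hs0 : 0 ≤ s := Real.sqrt_nonneg _
  have hs2 : s ^ 2 = a ^ 2 + b := by
    rw [hs, Real.sq_sqrt]
    · rw [ha]; ring
    · nlinarith [hb0]
  have hsa : a < s := by nlinarith [hs2, hb0, hs0, ha0]
  have hJneg : J < 0 := by
    rw [hJ]
    exact div_neg_of_neg_of_pos (by linarith) hD0
  have hbn : b * n = 8 * l * (l - 1) * p * (p - 1) := by
    rw [hb]; field_simp
  have key1 : 2 * a * (s - a) ≤ b := by nlinarith [sq_nonneg (s - a), hs2]
  have key2 : (s - a) ^ 2 ≤ b := by nlinarith [key1, hs2]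
  refine ⟨hJneg, ?_, ?_⟩
  · rw [abs_of_neg hJneg, hJ, show -((a - s) / D) = (s - a) / D by ring]
    rw [div_le_div_iff₀ hD0 (by positivity)]
    have h2 : (n:ℝ) * (2 * a * (s - a)) ≤ (n:ℝ) * b :=
      mul_le_mul_of_nonneg_left key1 hn'.le
    have e1 : (s - a) * ((2 - l) * n * p) * 2 = (n:ℝ) * (2 * a * (s - a)) := by
      rw [ha]; ring
    have e2 : 2 * (l - 1) * D * 2 = (n:ℝ) * b := by
      rw [hD]; linarith [hbn]
    linarith [h2, e1, e2]
  · rw [hJ, div_pow, div_le_div_iff₀ (by positivity) (by positivity)]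
    have c0 : (0:ℝ) ≤ l * n * p * (p - 1) := by positivity
    have h3 : (s - a) ^ 2 * (l * n * p * (p - 1)) ≤ b * (l * n * p * (p - 1)) :=
      mul_le_mul_of_nonneg_right key2 c0
    have e3 : b * (l * n * p * (p - 1)) = 2 * (l - 1) * D ^ 2 := by
      rw [hD]
      have : b * (l * (n:ℝ) * p * (p - 1)) = (b * n) * (l * p * (p - 1)) := by ring
      rw [this, hbn]; ring
    have e4 : (a - s) ^ 2 * (l * n * p * (p - 1)) = (s - a) ^ 2 * (l * n * p * (p - 1)) := by
      ring
    linarith [h3, e3, e4]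
end

section
/- Let n be a positive integer and let p, λ be real numbers with p ≥ 2 and 1 < λ < 2. Define L = ((λ−4)np − √((λ−4)²n²p² + 32λ(λ−1)np(p−1)))/(8(λ−1)), V = (λ/(λ−1))·(np + √(n²p² + 8np(p−1)))/4, and H = max(|L|, V). Then H > 0, 1/H ≤ 2(λ−1)/((p−1)λ), and 1/H ≤ 2(λ−1)/(λ·√(2np(p−1))). -/
set_option maxHeartbeats 1000000 in
theorem stmt_10 (n : ℕ) (hn : 0 < n) (p l : ℝ) (hp : 2 ≤ p) (hl1 : 1 < l) (hl2 : l < 2)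
    (L V H : ℝ)
    (hL : L = ((l - 4) * n * p -
      Real.sqrt ((l - 4) ^ 2 * n ^ 2 * p ^ 2 + 32 * l * (l - 1) * n * p * (p - 1))) /
      (8 * (l - 1)))
    (hV : V = (l / (l - 1)) * (n * p + Real.sqrt (n ^ 2 * p ^ 2 + 8 * n * p * (p - 1))) / 4)
    (hH : H = max |L| V) :
    0 < H ∧ 1 / H ≤ 2 * (l - 1) / ((p - 1) * l) ∧
      1 / H ≤ 2 * (l - 1) / (l * Real.sqrt (2 * n * p * (p - 1))) := by
  have hn1 : (1:ℝ) ≤ n := by exact_mod_cast hn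
  have hl0 : (0:ℝ) < l - 1 := by linarith
  have hlp : (0:ℝ) < l := by linarith
  have hnp : (2:ℝ) ≤ n * p := by nlinarith
  set S := Real.sqrt (n ^ 2 * p ^ 2 + 8 * n * p * (p - 1)) with hSdef
  have hSnn : 0 ≤ S := Real.sqrt_nonneg _
  clear_value S
  have hS0 : (n:ℝ) * p ≤ S := by
    rw [hSdef]
    have h1 : ((n:ℝ) * p) ^ 2 ≤ n ^ 2 * p ^ 2 + 8 * n * p * (p - 1) := by nlinarith
    calc (n:ℝ) * p = Real.sqrt (((n:ℝ) * p) ^ 2) := (Real.sqrt_sq (by nlinarith)).symm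
      _ ≤ _ := Real.sqrt_le_sqrt h1
  have hS1 : Real.sqrt (8 * n * p * (p - 1)) ≤ S := by
    rw [hSdef]; exact Real.sqrt_le_sqrt (by nlinarith)
  have h2sqrt : 2 * Real.sqrt (2 * n * p * (p - 1)) = Real.sqrt (8 * n * p * (p - 1)) := by
    have h := Real.sqrt_mul (show (0:ℝ) ≤ 2 ^ 2 by norm_num) (2 * n * p * (p - 1))
    rw [Real.sqrt_sq (by norm_num : (0:ℝ) ≤ 2)] at h
    rw [show (8:ℝ) * n * p * (p - 1) = 2 ^ 2 * (2 * n * p * (p - 1)) by ring, h]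
  have hVpos : 0 < V := by
    rw [hV]
    apply div_pos
    · apply mul_pos (div_pos hlp hl0); linarith
    · norm_num
  have hHV : V ≤ H := by rw [hH]; exact le_max_right _ _
  have hHpos : 0 < H := lt_of_lt_of_le hVpos hHV
  have hkey : 2 * (l - 1) * V = l * (n * p + S) / 2 := by
    rw [hV]; field_simp; ring
  refine ⟨hHpos, ?_, ?_⟩
  · have hden : 0 < (p - 1) * l := by nlinarith
    rw [div_le_div_iff₀ hHpos hden]
    have h3 : (p - 1) * l ≤ 2 * (l - 1) * V := by
      rw [hkey]
      have hnpp : p ≤ (n:ℝ) * p := by nlinarith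
      have h4 : 2 * (p - 1) ≤ n * p + S := by linarith
      nlinarith [mul_le_mul_of_nonneg_left h4 hlp.le]
    have hm := mul_le_mul_of_nonneg_left hHV (show (0:ℝ) ≤ 2 * (l - 1) by linarith)
    linarith
  · have hprod : (0:ℝ) < 2 * n * p * (p - 1) := by
      have h1 : (0:ℝ) < n * p := by linarith
      have h2 : (0:ℝ) < p - 1 := by linarith
      linarith [mul_pos h1 h2]
    have hsq : 0 < Real.sqrt (2 * n * p * (p - 1)) := Real.sqrt_pos.mpr hprod
    have hden : 0 < l * Real.sqrt (2 * n * p * (p - 1)) := mul_pos hlp hsq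
    rw [div_le_div_iff₀ hHpos hden]
    have h3 : l * Real.sqrt (2 * n * p * (p - 1)) ≤ 2 * (l - 1) * V := by
      rw [hkey]
      have h4 : 2 * Real.sqrt (2 * n * p * (p - 1)) ≤ n * p + S := by
        rw [h2sqrt]; linarith
      have h4' : Real.sqrt (2 * n * p * (p - 1)) ≤ (n * p + S) / 2 := by linarith
      have h5 := mul_le_mul_of_nonneg_left h4' hlp.le
      linarith
    have hm := mul_le_mul_of_nonneg_left hHV (show (0:ℝ) ≤ 2 * (l - 1) by linarith)
    linarith
end

section
/- Let n be a positive integer and let p, λ, a be real numbers with p ≥ 2, 1 < λ < 2 and a > 0. Define L = ((λ−4)np − √((λ−4)²n²p² + 32λ(λ−1)np(p−1)))/(8(λ−1)), V = (λ/(λ−1))·(np + √(n²p² + 8np(p−1)))/4, and H = max(|L|, V). Then for every real t with 0 ≤ t ≤ H, one has −(4(λ−1)a/n)·t^p + (λ−2)·p·a·t^{p−1} ≥ −(4(λ−1)a/n)·H^p + (λ−2)·p·a·H^{p−1}, where powers of nonnegative reals by real exponents are real powers. -/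
theorem stmt_15 (n : ℕ) (hn : 0 < n) (p l a : ℝ) (hp : 2 ≤ p) (hl1 : 1 < l) (hl2 : l < 2)
    (ha : 0 < a) (L V H : ℝ)
    (hL : L = ((l - 4) * n * p -
      Real.sqrt ((l - 4) ^ 2 * n ^ 2 * p ^ 2 + 32 * l * (l - 1) * n * p * (p - 1))) /
      (8 * (l - 1)))
    (hV : V = (l / (l - 1)) * (n * p + Real.sqrt (n ^ 2 * p ^ 2 + 8 * n * p * (p - 1))) / 4)
    (hH : H = max |L| V)
    (t : ℝ) (ht0 : 0 ≤ t) (htH : t ≤ H) :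
    -(4 * (l - 1) * a / n) * t ^ p + (l - 2) * p * a * t ^ (p - 1) ≥
      -(4 * (l - 1) * a / n) * H ^ p + (l - 2) * p * a * H ^ (p - 1) := by
  have hn' : (0:ℝ) < n := by exact_mod_cast hn
  have h1 : t ^ p ≤ H ^ p := Real.rpow_le_rpow ht0 htH (by linarith)
  have h2 : t ^ (p - 1) ≤ H ^ (p - 1) := Real.rpow_le_rpow ht0 htH (by linarith)
  have hc : 0 < 4 * (l - 1) * a / n := by
    apply div_pos _ hn'
    nlinarith
  have hd : (l - 2) * p * a < 0 := by
    have hpa : 0 < p * a := by nlinarith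
    nlinarith
  nlinarith [mul_le_mul_of_nonpos_left h2 (le_of_lt hd), mul_le_mul_of_nonneg_left h1 (le_of_lt hc)]
end
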